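/- Let 0 < τ_p < τ_l < τ_n, let β ∈ (τ_p/(τ_p+τ_n), 1], let k > 0, and set λ = (1/τ_p + 1/τ_l)/2. Assume additionally that λ > 1/τ_n. Then for every ω ∈ ℝ, Re G(−λ + iω, k, β) > 0, i.e. the shifted transfer function G(s − λ, k, β) is positive real on the imaginary axis. -/

import Mathlib

open Complex

/-- Open-loop transfer function of the mixed feedback amplifier. -/
noncomputable def G (τl τp τn k β : ℝ) (s : ℂ) : ℂ :=
  -(k : ℂ) * (((β * (τn + τp) - τp : ℝ) : ℂ) * s + ((2 * β - 1 : ℝ) : ℂ)) /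
    (((τl : ℂ) * s + 1) * ((τp : ℂ) * s + 1) * ((τn : ℂ) * s + 1))

/-!
Put `s = -λ + iω`. Since `λ` is the midpoint of `1/τ_p` and `1/τ_l`, the two factors
`(τ_l s + 1)(τ_p s + 1) = τ_l τ_p (s + 1/τ_l)(s + 1/τ_p)` multiply to the negative real number
`-τ_l τ_p (d² + ω²)` with `d = (1/τ_p - 1/τ_l)/2`, so `Re G` has the sign of
`Re ((a s + b) / (τ_n s + 1))`, where `a = β(τ_n + τ_p) - τ_p > 0` and `b = 2β - 1`.
That real part has the sign of `(a s + b)(τ_n s̄ + 1) = (b - aλ)(1 - τ_n λ) + a τ_n ω²`, and both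
`aλ - b` and `τ_n λ - 1` are positive.
-/

theorem re_affine_div_affine_pos {a b c : ℝ} {s : ℂ} (hac : 0 ≤ a * c)
    (h : 0 < (a * s.re + b) * (c * s.re + 1)) :
    0 < (((a : ℂ) * s + b) / ((c : ℂ) * s + 1)).re := by
  have hw : ((c : ℂ) * s + 1) ≠ 0 := fun h0 => by
    have : c * s.re + 1 = 0 := by simpa using congrArg Complex.re h0
    simp [this] at h
  rw [Complex.div_re, ← add_div]
  refine div_pos ?_ (Complex.normSq_pos.2 hw)
  simp only [Complex.add_re, Complex.add_im, Complex.mul_re, Complex.mul_im, Complex.ofReal_re,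
    Complex.ofReal_im, Complex.one_re, Complex.one_im]
  nlinarith [mul_nonneg hac (sq_nonneg s.im)]

theorem add_mul_add_of_re_eq_neg_avg {u v : ℝ} {s : ℂ} (hs : s.re = -((u + v) / 2)) :
    (s + u) * (s + v) = -((((u - v) / 2) ^ 2 + s.im ^ 2 : ℝ) : ℂ) := by
  apply Complex.ext <;>
    simp only [Complex.mul_re, Complex.mul_im, Complex.add_re, Complex.add_im, Complex.neg_re,
      Complex.neg_im, Complex.ofReal_re, Complex.ofReal_im, hs] <;> ring

theorem mul_add_one_mul_mul_add_one_of_re_eq_neg_avg {p q : ℝ} (hp : p ≠ 0) (hq : q ≠ 0) {s : ℂ}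
    (hs : s.re = -((1 / p + 1 / q) / 2)) :
    ((p : ℂ) * s + 1) * ((q : ℂ) * s + 1) =
      -((p * q * (((1 / p - 1 / q) / 2) ^ 2 + s.im ^ 2) : ℝ) : ℂ) := by
  have hp' : (p : ℂ) ≠ 0 := by exact_mod_cast hp
  have hq' : (q : ℂ) ≠ 0 := by exact_mod_cast hq
  calc ((p : ℂ) * s + 1) * ((q : ℂ) * s + 1)
      = (p * q : ℂ) * ((s + ((1 / p : ℝ) : ℂ)) * (s + ((1 / q : ℝ) : ℂ))) := by
        push_cast
        field_simp
    _ = _ := by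
        rw [add_mul_add_of_re_eq_neg_avg hs]
        push_cast
        ring

theorem mul_sub_two_mul_sub_one_pos {β τp τn L : ℝ} (hβ : β ≤ 1) (hτn : 0 < τn) (hτ : τp ≤ τn)
    (ha : 0 < β * (τn + τp) - τp) (hL : 0 < τn * L - 1) :
    0 < (β * (τn + τp) - τp) * L - (2 * β - 1) := by
  have hb : (2 * β - 1) * τn ≤ β * (τn + τp) - τp := by
    nlinarith [mul_nonneg (sub_nonneg.2 hβ) (sub_nonneg.2 hτ)]
  have key : τn * ((β * (τn + τp) - τp) * L - (2 * β - 1)) =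
      (β * (τn + τp) - τp) * (τn * L - 1) + ((β * (τn + τp) - τp) - (2 * β - 1) * τn) := by
    ring
  nlinarith [mul_pos ha hL]

theorem stmt4 (τl τp τn β k : ℝ)
    (hτp : 0 < τp) (hτl : τp < τl) (hτn : τl < τn)
    (hβ : β ∈ Set.Ioc (τp / (τp + τn)) 1) (hk : 0 < k)
    (hlam : 1/τn < (1/τp + 1/τl)/2) :
    ∀ ω : ℝ,
      0 < (G τl τp τn k β (-(((1/τp + 1/τl)/2 : ℝ) : ℂ) + Complex.I * (ω : ℂ))).re := by
  intro ω
  set L : ℝ := (1/τp + 1/τl)/2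
  set s : ℂ := -(L : ℂ) + Complex.I * ω
  have hs_re : s.re = -L := by simp [s]
  have hτl0 : 0 < τl := hτp.trans hτl
  have hτn0 : 0 < τn := hτl0.trans hτn
  set a := β * (τn + τp) - τp
  set b := 2 * β - 1
  have ha : 0 < a := by
    have := hβ.1
    rw [div_lt_iff₀ (by positivity)] at this
    linarith
  have hτnL : 0 < τn * L - 1 := by
    rw [div_lt_iff₀ hτn0] at hlam
    linarith
  have haL : 0 < a * L - b := mul_sub_two_mul_sub_one_pos hβ.2 hτn0 (hτl.trans hτn).le ha hτnL
  have hshift : 0 < (((a : ℂ) * s + b) / ((τn : ℂ) * s + 1)).re := by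
    refine re_affine_div_affine_pos (mul_nonneg ha.le hτn0.le) ?_
    rw [hs_re]
    nlinarith [mul_pos haL hτnL]
  set c : ℝ := τl * τp * (((1/τl - 1/τp) / 2) ^ 2 + s.im ^ 2)
  have hc : 0 < c := by
    have : (1/τl - 1/τp) / 2 ≠ 0 := by
      have := one_div_lt_one_div_of_lt hτp hτl
      intro h
      linarith
    positivity
  have hfactor : ((τl : ℂ) * s + 1) * ((τp : ℂ) * s + 1) = -(c : ℂ) :=
    mul_add_one_mul_mul_add_one_of_re_eq_neg_avg hτl0.ne' hτp.ne' (by rw [hs_re]; ring)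
  have hG : G τl τp τn k β s = ((k / c : ℝ) : ℂ) * (((a : ℂ) * s + b) / ((τn : ℂ) * s + 1)) := by
    have : (c : ℂ) ≠ 0 := by exact_mod_cast hc.ne'
    unfold G
    rw [hfactor]
    push_cast [a, b]
    field_simp
  rw [hG, Complex.re_ofReal_mul]
  exact mul_pos (div_pos hk hc) hshift
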